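/- For all integers n ≥ 1 and 0 ≤ s ≤ 2^n, the total influence of the lexicographic function satisfies I[ℓ_n⟨s⟩] = 2sn/2^n − (4/2^n)·Σ_{x=0}^{s−1} wt(x), where wt(x) is the number of ones in the binary representation of x. -/

import Mathlib

/-!
Let `A` be the initial segment of size `s`. The sensitivity sum counts every boundary edge of `A`
twice, and counting the pairs `(x, i)` with `x ∈ A` gives `n |A| = |∂A| + 2 e(A)`, so the total
sensitivity is `2 n s - 4 e(A)`. Since flipping a coordinate from `false` (digit `1`) to `true`
(digit `0`) lowers the rank, `A` is an upper set for the coordinatewise order, and its internal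
edges are exactly the pairs `(x, i)` with `x ∈ A` and `x i = false`. Reading `x` as the binary
expansion of its rank, `e(A) = ∑_{a < s} wt(a)`.
-/

noncomputable section

/-- Number of neighbors of `x` in the Hamming cube at which `f` differs from `f x`. -/
def sensitivity {n : ℕ} (f : (Fin n → Bool) → ℝ) (x : Fin n → Bool) : ℕ :=
  (Finset.univ.filter fun i : Fin n => f (Function.update x i (!(x i))) ≠ f x).card

/-- Total influence as average sensitivity: I[f] = (1/2^n) Σ_x S_f(x). -/
def sensInfluence {n : ℕ} (f : (Fin n → Bool) → ℝ) : ℝ :=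
  (∑ x : Fin n → Bool, (sensitivity f x : ℝ)) / 2 ^ n

/-- Rank of `x` in the lexicographic order on {-1,1}^n, where `true` (= -1) comes
first and coordinate 0 is the most significant. -/
def lexRank {n : ℕ} (x : Fin n → Bool) : ℕ :=
  ∑ i : Fin n, (if x i then 0 else 2 ^ (n - 1 - (i : ℕ)))

/-- The lexicographic function ℓ_n⟨s⟩: value -1 (true) on the initial segment of
size `s` in lexicographic order, +1 elsewhere. -/
def lexF (n s : ℕ) : (Fin n → Bool) → ℝ :=
  fun x => if lexRank x < s then -1 else 1

open Finset

section Flip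

variable {ι : Type*} [DecidableEq ι]

def flipAt (x : ι → Bool) (i : ι) : ι → Bool := Function.update x i (!x i)

@[simp]
lemma flipAt_self (x : ι → Bool) (i : ι) : flipAt x i i = !x i := by
  simp [flipAt]

@[simp]
lemma flipAt_flipAt (x : ι → Bool) (i : ι) : flipAt (flipAt x i) i = x := by
  simp [flipAt]

lemma le_flipAt {x : ι → Bool} {i : ι} (h : x i = false) : x ≤ flipAt x i := by
  rw [flipAt, le_update_self_iff, h]
  exact Bool.false_le _

lemma sum_sum_flipAt [Fintype ι] {M : Type*} [AddCommMonoid M] (F : (ι → Bool) → ι → M) :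
    ∑ x, ∑ i, F (flipAt x i) i = ∑ x, ∑ i, F x i := by
  rw [sum_comm, sum_comm (f := F)]
  refine sum_congr rfl fun i _ => ?_
  exact Equiv.sum_comp (Function.Involutive.toPerm (flipAt · i) (flipAt_flipAt · i)) (F · i)

variable [Fintype ι] (p : (ι → Bool) → Prop) [DecidablePred p]

/-- An internal edge of an upper set has exactly one endpoint `x` with `x i = false`, and every
pair `(x, i)` with `p x` and `x i = false` is an internal edge. -/
lemma sum_card_flipAt_of_isUpperSet (hp : IsUpperSet {x | p x}) :
    ∑ x, #{i | p x ∧ p (flipAt x i)} = 2 * ∑ x with p x, #{i | x i = false} := by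
  have split_by_direction (x : ι → Bool) (i : ι) :
      (if p x ∧ p (flipAt x i) then 1 else 0) =
        (if p x ∧ p (flipAt x i) ∧ x i = false then 1 else 0) +
          (if p (flipAt x i) ∧ p (flipAt (flipAt x i) i) ∧ flipAt x i i = false then 1 else 0) := by
    cases h : x i <;> simp [h, and_comm]
  have down_edge (x : ι → Bool) (i : ι) :
      (if p x ∧ p (flipAt x i) ∧ x i = false then 1 else 0) =
        (if p x then if x i = false then 1 else 0 else 0) := by
    rw [← ite_and]
    exact if_congr ⟨fun h => ⟨h.1, h.2.2⟩, fun h => ⟨h.1, hp (le_flipAt h.2) h.1, h.2⟩⟩ rfl rfl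
  simp only [card_filter, split_by_direction, sum_add_distrib]
  rw [sum_sum_flipAt (fun x i => if p x ∧ p (flipAt x i) ∧ x i = false then 1 else 0)]
  simp only [down_edge, sum_ite_irrel, sum_const_zero, sum_filter]
  ring

end Flip

section Sensitivity

variable {n : ℕ} (p : (Fin n → Bool) → Prop) [DecidablePred p]

lemma sensitivity_ite_neg_one_one (x : Fin n → Bool) :
    sensitivity (fun y => if p y then (-1 : ℝ) else 1) x = #{i | ¬(p (flipAt x i) ↔ p x)} := by
  unfold sensitivity
  congr 1
  ext i
  simp only [mem_filter, mem_univ, true_and, flipAt]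
  split_ifs <;> norm_num [*]

/-- Each of the `n * #{x | p x}` pairs `(x, i)` with `p x` is a boundary edge or an oriented
internal edge, and the sensitivity sum sees every boundary edge from both of its endpoints. -/
lemma sum_sensitivity_add_two_mul_sum_card_flipAt :
    ∑ x, sensitivity (fun y => if p y then (-1 : ℝ) else 1) x
      + 2 * ∑ x, #{i | p x ∧ p (flipAt x i)} = 2 * n * #{x | p x} := by
  have pointwise (x : Fin n → Bool) (i : Fin n) :
      (if ¬(p (flipAt x i) ↔ p x) then 1 else 0) + 2 * (if p x ∧ p (flipAt x i) then 1 else 0) =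
        (if p x then 1 else 0) + (if p (flipAt x i) then 1 else 0) := by
    by_cases p x <;> by_cases p (flipAt x i) <;> simp_all
  simp only [sensitivity_ite_neg_one_one, card_filter, mul_sum, ← sum_add_distrib, pointwise]
  rw [sum_congr rfl fun x _ => sum_add_distrib, sum_add_distrib,
    sum_sum_flipAt (fun x _ => if p x then 1 else 0)]
  simp only [sum_const, card_univ, Fintype.card_fin, smul_eq_mul, ← mul_sum]
  ring

end Sensitivity

section LexRank

variable {n : ℕ}

lemma lexRank_antitone : Antitone (lexRank (n := n)) := fun x y hxy =>
  sum_le_sum fun i _ => by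
    have := hxy i
    cases hx : x i <;> cases hy : y i <;> simp_all [Bool.le_iff_imp]

lemma isUpperSet_lexRank_lt (s : ℕ) : IsUpperSet {x : Fin n → Bool | lexRank x < s} :=
  fun _ _ hxy hx => (lexRank_antitone hxy).trans_lt hx

lemma lexRank_eq_sum_rev (x : Fin n → Bool) :
    lexRank x = ∑ j : Fin n, (if x j.rev then 0 else 1) * 2 ^ (j : ℕ) := by
  rw [lexRank, ← Equiv.sum_comp Fin.revPerm]
  refine sum_congr rfl fun j _ => ?_
  have hj : n - 1 - (n - (j + 1)) = j := by omega
  simp [Fin.val_rev, hj]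

lemma lexRank_eq_ofDigits (x : Fin n → Bool) :
    lexRank x = Nat.ofDigits 2 (List.ofFn fun j : Fin n => if x j.rev then 0 else 1) := by
  simp only [lexRank_eq_sum_rev, Nat.ofDigits_eq_sum_mapIdx, List.mapIdx_eq_ofFn, List.get_ofFn,
    List.length_ofFn, List.sum_ofFn]
  rfl

lemma digits_sum_lexRank (x : Fin n → Bool) :
    (Nat.digits 2 (lexRank x)).sum = #{i | x i = false} := by
  have digits_lt_two : ∀ d ∈ List.ofFn fun j : Fin n => if x j.rev then 0 else 1, d < 2 := by
    simp only [List.mem_ofFn, forall_exists_index]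
    rintro _ j rfl
    split <;> omega
  rw [lexRank_eq_ofDigits,
    Nat.sum_digits_ofDigits_eq_sum one_lt_two ⟨List.length_ofFn, digits_lt_two⟩, List.sum_ofFn,
    card_filter, ← Equiv.sum_comp Fin.revPerm (fun i => if x i = false then 1 else 0)]
  refine sum_congr rfl fun j _ => ?_
  simp only [Fin.revPerm_apply]
  cases x j.rev <;> rfl

def lexRankEquiv : (Fin n → Bool) ≃ Fin (2 ^ n) :=
  (Equiv.arrowCongr Fin.revPerm (Equiv.boolNot.trans finTwoEquiv.symm)).trans finFunctionFinEquiv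

lemma coe_lexRankEquiv (x : Fin n → Bool) : (lexRankEquiv x : ℕ) = lexRank x := by
  rw [lexRankEquiv, lexRank_eq_sum_rev, Equiv.trans_apply, finFunctionFinEquiv_apply]
  refine sum_congr rfl fun j _ => ?_
  cases h : x j.rev <;> simp [h, finTwoEquiv]

lemma sum_lexRank_lt {M : Type*} [AddCommMonoid M] {s : ℕ} (hs : s ≤ 2 ^ n) (g : ℕ → M) :
    ∑ x : Fin n → Bool with lexRank x < s, g (lexRank x) = ∑ a ∈ range s, g a := by
  simp only [sum_filter, ← coe_lexRankEquiv]
  rw [lexRankEquiv.sum_comp (fun a : Fin (2 ^ n) => if (a : ℕ) < s then g a else 0),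
    Fin.sum_univ_eq_sum_range (fun a => if a < s then g a else 0), ← sum_filter]
  congr 1
  ext a
  simp only [mem_filter, mem_range]
  omega

end LexRank

theorem influence_lex_hart (n : ℕ) (s : ℕ) (hs : s ≤ 2 ^ n) :
    sensInfluence (lexF n s) =
      2 * s * n / 2 ^ n - (4 / 2 ^ n) * ∑ x ∈ Finset.range s, ((Nat.digits 2 x).sum : ℝ) := by
  have count := sum_sensitivity_add_two_mul_sum_card_flipAt (n := n) (lexRank · < s)
  rw [sum_card_flipAt_of_isUpperSet _ (isUpperSet_lexRank_lt s)] at count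
  have weights : ∑ x : Fin n → Bool with lexRank x < s, #{i | x i = false} =
      ∑ a ∈ range s, (Nat.digits 2 a).sum := by
    simp only [← digits_sum_lexRank]
    exact sum_lexRank_lt hs (fun a => (Nat.digits 2 a).sum)
  have card : #{x : Fin n → Bool | lexRank x < s} = s := by
    simpa using sum_lexRank_lt hs (fun _ => (1 : ℕ))
  rw [weights, card] at count
  have count_real := congrArg (Nat.cast : ℕ → ℝ) count
  simp only [Nat.cast_add, Nat.cast_mul, Nat.cast_sum, Nat.cast_ofNat] at count_real
  unfold sensInfluence lexF
  field_simp
  linarith
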